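/- For any elements x, y of a group K and every natural number m ≥ 0, the element (x·y⁻¹)^m·x belongs to the closure of {x, y} under ∘. -/
import Mathlib


noncomputable section

/-- The binary operation `a ∘ b = a * b⁻¹ * a`. -/
def circ {K : Type*} [Group K] (a b : K) : K := a * b⁻¹ * a

/-- A set is closed under `circ`. -/
def CircClosed {K : Type*} [Group K] (S : Set K) : Prop :=
  ∀ a ∈ S, ∀ b ∈ S, circ a b ∈ S

/-- The closure of a set under `circ`: the smallest superset closed under `circ`. -/
def circClosure {K : Type*} [Group K] (X : Set K) : Set K :=
  ⋂₀ {S : Set K | X ⊆ S ∧ CircClosed S}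

/-- `L` is a reflection system for the subgroup `K`. -/
def IsReflectionSystem {G : Type*} [Group G] (K : Subgroup G) (L : Set G) : Prop :=
  Subgroup.closure L = K ∧ CircClosed L ∧ (1 : G) ∈ L

/-- The set `L·H`. -/
def mulSet {G : Type*} [Group G] (L : Set G) (H : Subgroup G) : Set G :=
  {x | ∃ l ∈ L, ∃ h ∈ H, x = l * h}



lemma subset_circClosure {K : Type*} [Group K] (X : Set K) : X ⊆ circClosure X := by
  intro a ha S hS; exact hS.1 ha

lemma circClosure_closed {K : Type*} [Group K] (X : Set K) : CircClosed (circClosure X) := by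
  intro a ha b hb S hS
  exact hS.2 a (ha S hS) b (hb S hS)

theorem statement_1 {K : Type*} [Group K] (x y : K) (m : ℕ) :
    (x * y⁻¹) ^ m * x ∈ circClosure {x, y} := by
  suffices h : ∀ n : ℕ, (x * y⁻¹) ^ n * x ∈ circClosure {x, y} ∧
      (x * y⁻¹) ^ (n + 1) * x ∈ circClosure {x, y} from (h m).1
  intro n
  induction n with
  | zero =>
    constructor
    · simpa using subset_circClosure {x, y} (Set.mem_insert x {y})
    · have := circClosure_closed {x, y} x (subset_circClosure _ (Set.mem_insert x {y}))
        y (subset_circClosure _ (Set.mem_insert_of_mem x rfl))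
      simpa [circ, mul_assoc] using this
  | succ n ih =>
    refine ⟨ih.2, ?_⟩
    have := circClosure_closed {x, y} _ ih.2 _ ih.1
    have key : circ ((x * y⁻¹) ^ (n + 1) * x) ((x * y⁻¹) ^ n * x)
        = (x * y⁻¹) ^ (n + 1 + 1) * x := by
      simp [circ, pow_succ, mul_assoc]
    rwa [key] at this

end
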